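/- For every integer n ≥ 32, the threshold b_n satisfies (n+5)/2 < b_n < (2n-1)/3. -/

import Mathlib

open Finset

/-- The threshold `b_n = min{ j : 2 ≤ j ≤ n, ∑_{i=j+1}^n 1/(i-2) ≤ 1/2 }` (empty sum = 0). -/
noncomputable def bThresh (n : ℕ) : ℕ :=
  sInf {j : ℕ | 2 ≤ j ∧ j ≤ n ∧ ∑ i ∈ Finset.Icc (j + 1) n, (1 : ℝ) / ((i : ℝ) - 2) ≤ 1 / 2}

/-- `u_n = (b_n - 2)(2n - 4) ∑_{i=b_n}^n 1/(i-2)`. -/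
noncomputable def uVal (n : ℕ) : ℝ :=
  ((bThresh n : ℝ) - 2) * (2 * (n : ℝ) - 4) *
    ∑ i ∈ Finset.Icc (bThresh n) n, (1 : ℝ) / ((i : ℝ) - 2)

/-- `f_n(x) = 3x² - (1+4n)x + (n-2)b_n + 2(n+1) + u_n`. -/
noncomputable def fPoly (n : ℕ) (x : ℝ) : ℝ :=
  3 * x ^ 2 - (1 + 4 * (n : ℝ)) * x + ((n : ℝ) - 2) * (bThresh n : ℝ) + 2 * ((n : ℝ) + 1) + uVal n

/-- The threshold `a_n = min{ j : 2 ≤ j ≤ n, f_n(j) ≤ 0 }`. -/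
noncomputable def aThresh (n : ℕ) : ℕ :=
  sInf {j : ℕ | 2 ≤ j ∧ j ≤ n ∧ fPoly n (j : ℝ) ≤ 0}

/-!
Sandwich the tail `S_j = ∑_{i=j+1}^n 1/(i-2)` between two telescoping sums of logarithms,
`log ((n-1)/(j-1)) ≤ S_j ≤ log ((2n-3)/(2j-3))`.
Since `S_{b_n} ≤ 1/2`, the lower estimate gives `n - 1 ≤ √e (b_n - 1)`, whence `b_n > (n+5)/2`.
For `j = ⌊(2n-2)/3⌋` one has `(2n-3)/(2j-3) ≤ 61/37 < √e` once `n ≥ 32` (`61/37` is the worst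
ratio, attained at `n = 32`), so the upper estimate gives `S_j ≤ 1/2`, whence `b_n ≤ j < (2n-1)/3`.
-/

open Real

theorem Finset.sum_Icc_succ_sub_pred {M : Type*} [AddCommGroup M] (g : ℕ → M) {j n : ℕ}
    (hjn : j ≤ n) : ∑ i ∈ Icc (j + 1) n, (g i - g (i - 1)) = g n - g j := by
  induction n, hjn using Nat.le_induction with
  | base => simp
  | succ n _ ih =>
    rw [sum_Icc_succ_top (by omega), ih, Nat.add_sub_cancel]
    abel

lemma log_sub_log_le_iff {a b c : ℝ} (ha : 0 < a) (hb : 0 < b) :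
    log a - log b ≤ c ↔ a ≤ exp c * b := by
  rw [← log_div ha.ne' hb.ne', log_le_iff_le_exp (div_pos ha hb), div_le_iff₀ hb]

lemma log_add_one_sub_log_le_inv {y : ℝ} (hy : 0 < y) : log (y + 1) - log y ≤ y⁻¹ := by
  rw [← log_div (by positivity) hy.ne']
  calc log ((y + 1) / y) ≤ (y + 1) / y - 1 := log_le_sub_one_of_pos (by positivity)
    _ = y⁻¹ := by field_simp; ring

lemma inv_le_log_two_mul_add_one_sub_log {y : ℝ} (hy : 1 / 2 < y) :
    y⁻¹ ≤ log (2 * y + 1) - log (2 * y - 1) := by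
  have hpos : 0 < 2 * y - 1 := by linarith
  have h := le_log_one_add_of_nonneg (div_pos two_pos hpos).le
  have hlhs : 2 * (2 / (2 * y - 1)) / (2 / (2 * y - 1) + 2) = y⁻¹ := by
    field_simp
    ring
  have hrhs : 1 + 2 / (2 * y - 1) = (2 * y + 1) / (2 * y - 1) := by
    field_simp
    ring
  rwa [hlhs, hrhs, log_div (by positivity) hpos.ne'] at h

lemma log_sub_log_le_sum_Icc {j n : ℕ} (hj : 2 ≤ j) (hjn : j ≤ n) :
    log ((n : ℝ) - 1) - log ((j : ℝ) - 1) ≤ ∑ i ∈ Icc (j + 1) n, (1 : ℝ) / ((i : ℝ) - 2) := by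
  rw [← sum_Icc_succ_sub_pred (fun i : ℕ ↦ log ((i : ℝ) - 1)) hjn]
  refine sum_le_sum fun i hi ↦ ?_
  have hi : 3 ≤ i := by grind
  have hi' : (3 : ℝ) ≤ i := by exact_mod_cast hi
  have h := log_add_one_sub_log_le_inv (y := (i : ℝ) - 2) (by linarith)
  rw [Nat.cast_pred (by omega), one_div, sub_sub, one_add_one_eq_two]
  rwa [show (i : ℝ) - 2 + 1 = i - 1 by ring] at h

lemma sum_Icc_le_log_sub_log {j n : ℕ} (hj : 2 ≤ j) (hjn : j ≤ n) :
    ∑ i ∈ Icc (j + 1) n, (1 : ℝ) / ((i : ℝ) - 2) ≤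
      log (2 * (n : ℝ) - 3) - log (2 * (j : ℝ) - 3) := by
  rw [← sum_Icc_succ_sub_pred (fun i : ℕ ↦ log (2 * (i : ℝ) - 3)) hjn]
  refine sum_le_sum fun i hi ↦ ?_
  have hi : 3 ≤ i := by grind
  have hi' : (3 : ℝ) ≤ i := by exact_mod_cast hi
  have h := inv_le_log_two_mul_add_one_sub_log (y := (i : ℝ) - 2) (by linarith)
  rw [Nat.cast_pred (by omega), one_div]
  rwa [show 2 * ((i : ℝ) - 2) + 1 = 2 * i - 3 by ring,
    show 2 * ((i : ℝ) - 2) - 1 = 2 * (i - 1) - 3 by ring] at h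

lemma exp_one_half_lt : exp (1 / 2) < 5 / 3 := by
  rw [← pow_lt_pow_iff_left₀ (exp_pos _).le (by norm_num) two_ne_zero, ← exp_nat_mul]
  norm_num
  linarith [exp_one_lt_d9]

lemma lt_exp_one_half : 61 / 37 < exp (1 / 2) := by
  rw [← pow_lt_pow_iff_left₀ (by norm_num) (exp_pos _).le two_ne_zero, ← exp_nat_mul]
  norm_num
  linarith [exp_one_gt_d9]

lemma bThresh_spec {n : ℕ} (hn : 2 ≤ n) :
    2 ≤ bThresh n ∧ bThresh n ≤ n ∧
      ∑ i ∈ Icc (bThresh n + 1) n, (1 : ℝ) / ((i : ℝ) - 2) ≤ 1 / 2 :=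
  Nat.sInf_mem (s := {j : ℕ | 2 ≤ j ∧ j ≤ n ∧
    ∑ i ∈ Icc (j + 1) n, (1 : ℝ) / ((i : ℝ) - 2) ≤ 1 / 2}) ⟨n, hn, le_rfl, by simp⟩

lemma bThresh_le {n j : ℕ} (hj : 2 ≤ j) (hjn : j ≤ n)
    (hsum : ∑ i ∈ Icc (j + 1) n, (1 : ℝ) / ((i : ℝ) - 2) ≤ 1 / 2) : bThresh n ≤ j :=
  Nat.sInf_le ⟨hj, hjn, hsum⟩

lemma lt_bThresh {n : ℕ} (hn : 21 ≤ n) : ((n : ℝ) + 5) / 2 < bThresh n := by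
  obtain ⟨hb, hbn, hsum⟩ := bThresh_spec (by omega : 2 ≤ n)
  have hn' : (21 : ℝ) ≤ n := by exact_mod_cast hn
  have hb' : (2 : ℝ) ≤ bThresh n := by exact_mod_cast hb
  have hlog := (log_sub_log_le_sum_Icc hb hbn).trans hsum
  rw [log_sub_log_le_iff (by linarith) (by linarith)] at hlog
  nlinarith [exp_one_half_lt]

lemma bThresh_lt {n : ℕ} (hn : 32 ≤ n) : (bThresh n : ℝ) < (2 * (n : ℝ) - 1) / 3 := by
  set j := (2 * n - 2) / 3 with hj
  have hj2 : 2 ≤ j := by omega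
  have hjn : j ≤ n := by omega
  have hj_le : 3 * (j : ℝ) + 2 ≤ 2 * n := by exact_mod_cast (by omega : 3 * j + 2 ≤ 2 * n)
  have hj_ge : 2 * (n : ℝ) ≤ 3 * j + 4 := by exact_mod_cast (by omega : 2 * n ≤ 3 * j + 4)
  have hn' : (32 : ℝ) ≤ n := by exact_mod_cast hn
  have hsum : ∑ i ∈ Icc (j + 1) n, (1 : ℝ) / ((i : ℝ) - 2) ≤ 1 / 2 := by
    refine (sum_Icc_le_log_sub_log hj2 hjn).trans ?_
    rw [log_sub_log_le_iff (by linarith) (by linarith)]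
    nlinarith [lt_exp_one_half]
  have hb : (bThresh n : ℝ) ≤ j := by exact_mod_cast bThresh_le hj2 hjn hsum
  linarith

theorem bThresh_crude_bounds (n : ℕ) (hn : 32 ≤ n) :
    ((n : ℝ) + 5) / 2 < (bThresh n : ℝ) ∧ (bThresh n : ℝ) < (2 * (n : ℝ) - 1) / 3 :=
  ⟨lt_bThresh (by omega), bThresh_lt hn⟩
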